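/- For every x in the free group F and every n ∈ ℕ, the number of elements w ∈ F with |w| = n and |w x| ≤ |x| is at most q^{⌊n/2⌋}. -/

import Mathlib

/-!
If `|w| = n` and `|w x| ≤ |x|`, then at least `⌈n/2⌉` letters cancel in the product `w x`, so
the last `n - ⌊n/2⌋` letters of `w` are forced by `x` and `w` is determined by its first
`⌊n/2⌋` letters. Those form a reduced word followed by a fixed letter; read from right to left,
each of its letters is anything but the inverse of its successor, which leaves at most `2r - 1`
choices per letter.
-/

noncomputable section

/-- Word length on the free group: the number of letters of the reduced word. -/
def wlen {α : Type*} [DecidableEq α] (x : FreeGroup α) : ℕ := x.toWord.length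

open Finset in
theorem List.encard_setOf_isChain_append_le {β : Type*} [Fintype β] {R : β → β → Prop}
    [DecidableRel R] {q : ℕ} (hR : ∀ b, #{a | R a b} ≤ q) (m : ℕ) {s : List β}
    (hs : s ≠ [] ∨ m = 0) :
    {l : List β | l.length = m ∧ (l ++ s).IsChain R}.encard ≤ q ^ m := by
  induction m generalizing s with
  | zero =>
    rw [pow_zero, Set.encard_le_one_iff]
    rintro l l' ⟨hl, -⟩ ⟨hl', -⟩
    rw [List.length_eq_zero_iff.mp hl, List.length_eq_zero_iff.mp hl']
  | succ m ih =>
    obtain ⟨b, t, rfl⟩ := List.exists_cons_of_ne_nil (hs.resolve_right m.succ_ne_zero)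
    have hcover : {l : List β | l.length = m + 1 ∧ (l ++ b :: t).IsChain R} ⊆
        ⋃ a ∈ ({a | R a b} : Finset β),
          (· ++ [a]) '' {l | l.length = m ∧ (l ++ a :: b :: t).IsChain R} := by
      rintro l ⟨hlen, hchain⟩
      obtain ⟨l', a, rfl⟩ := (List.eq_nil_or_concat' l).resolve_left (by rintro rfl; simp at hlen)
      rw [List.append_assoc, List.singleton_append] at hchain
      simp only [Set.mem_iUnion, Set.mem_image]
      exact ⟨a, by simpa using (List.isChain_append_cons_cons.mp hchain).2.1, l',
        ⟨by simpa using hlen, hchain⟩, rfl⟩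
    calc _ ≤ _ := Set.encard_le_encard hcover
      _ ≤ ∑ a ∈ ({a | R a b} : Finset β),
            ((· ++ [a]) '' {l | l.length = m ∧ (l ++ a :: b :: t).IsChain R}).encard :=
        Finset.set_encard_biUnion_le _ _
      _ ≤ ∑ _a ∈ ({a | R a b} : Finset β), (q ^ m : ℕ∞) :=
        Finset.sum_le_sum fun a _ => (Set.encard_image_le _ _).trans (ih (Or.inl (by simp)))
      _ ≤ q ^ (m + 1) := by
        rw [Finset.sum_const, nsmul_eq_mul, pow_succ', ← Nat.cast_pow]
        exact mul_le_mul_left (by exact_mod_cast hR b) _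

namespace FreeGroup

variable {α : Type*} [DecidableEq α]

theorem IsReduced.exists_reduce_append_eq {L₁ L₂ : List (α × Bool)} (h₁ : IsReduced L₁)
    (h₂ : IsReduced L₂) :
    ∃ L₁' C L₂', L₁ = L₁' ++ invRev C ∧ L₂ = C ++ L₂' ∧ reduce (L₁ ++ L₂) = L₁' ++ L₂' := by
  induction L₁ using List.reverseRecOn generalizing L₂ with
  | nil => exact ⟨[], [], L₂, rfl, rfl, h₂.reduce_eq⟩
  | append_singleton L a ih =>
    cases L₂ with
    | nil => exact ⟨L ++ [a], [], [], by simp, rfl, by simpa using h₁.reduce_eq⟩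
    | cons b L₂ =>
      by_cases hcancel : b = (a.1, !a.2)
      · subst hcancel
        obtain ⟨L₁', C, L₂', rfl, rfl, hred⟩ :=
          ih (h₁.infix (List.prefix_append _ _).isInfix) (h₂.infix (List.suffix_cons _ _).isInfix)
        refine ⟨L₁', (a.1, !a.2) :: C, L₂', by simp [invRev], rfl, ?_⟩
        rw [← hred, ← reduce.Step.eq (@Red.Step.not _ (L₁' ++ invRev C) (C ++ L₂') a.1 a.2)]
        simp
      · have hab : a.1 = b.1 → a.2 = b.2 := by
          obtain ⟨a₁, a₂⟩ := a; obtain ⟨b₁, b₂⟩ := b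
          rintro rfl; cases a₂ <;> cases b₂ <;> simp_all
        have hred : IsReduced (L ++ [a] ++ b :: L₂) :=
          h₁.append_overlap (isReduced_cons_cons.mpr ⟨hab, h₂⟩) (List.cons_ne_nil _ _)
        exact ⟨L ++ [a], [], b :: L₂, by simp, rfl, by simpa using hred.reduce_eq⟩

theorem exists_toWord_mul_eq (x y : FreeGroup α) :
    ∃ L₁ C L₂, x.toWord = L₁ ++ invRev C ∧ y.toWord = C ++ L₂ ∧ (x * y).toWord = L₁ ++ L₂ := by
  rw [toWord_mul]
  exact isReduced_toWord.exists_reduce_append_eq isReduced_toWord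

theorem toWord_drop_half_eq_of_length_toWord_mul_le {x y : FreeGroup α} {n : ℕ}
    (hn : x.toWord.length = n) (h : (x * y).toWord.length ≤ y.toWord.length) :
    x.toWord.drop (n / 2) = invRev (y.toWord.take (n - n / 2)) := by
  obtain ⟨L₁, C, L₂, hx, hy, hxy⟩ := exists_toWord_mul_eq x y
  set k := n - n / 2
  have hlen : n = L₁.length + C.length := by simp [← hn, hx]
  have hk : k ≤ C.length := by simp only [hxy, hy, List.length_append] at h; omega
  have hx' : x.toWord = (L₁ ++ invRev (C.drop k)) ++ invRev (C.take k) := by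
    rw [hx, List.append_assoc, ← invRev_append, List.take_append_drop]
  have hprefix : (L₁ ++ invRev (C.drop k)).length = n / 2 := by
    simp only [List.length_append, invRev_length, List.length_drop]
    omega
  rw [hy, List.take_append_of_le_length hk, ← hprefix, hx', List.drop_left]

theorem card_filter_fst_eq_imp_snd_eq [Fintype α] (b : α × Bool) :
    Finset.card {a : α × Bool | a.1 = b.1 → a.2 = b.2} = 2 * Fintype.card α - 1 := by
  have hfilter : ({a : α × Bool | a.1 = b.1 → a.2 = b.2} : Finset _) =
      Finset.univ.erase (b.1, !b.2) := by
    ext ⟨a₁, a₂⟩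
    obtain ⟨b₁, b₂⟩ := b
    cases a₂ <;> cases b₂ <;> simp [imp_iff_not_or, or_comm]
  rw [hfilter, Finset.card_erase_of_mem (Finset.mem_univ _), Finset.card_univ, Fintype.card_prod,
    Fintype.card_bool, mul_comm]

theorem encard_setOf_isReduced_append_le [Fintype α] (m : ℕ) {s : List (α × Bool)}
    (hs : s ≠ [] ∨ m = 0) :
    {l | l.length = m ∧ IsReduced (l ++ s)}.encard ≤ (2 * Fintype.card α - 1 : ℕ) ^ m :=
  List.encard_setOf_isChain_append_le (fun b => (card_filter_fst_eq_imp_snd_eq b).le) m hs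

end FreeGroup

open FreeGroup in
theorem count_length_decreasing_words_general
    (r : ℕ) (q : ℕ) (hq : q = 2 * r - 1)
    (x : FreeGroup (Fin r)) (n : ℕ) :
    {w : FreeGroup (Fin r) | wlen w = n ∧ wlen (w * x) ≤ wlen x}.encard
      ≤ (q ^ (n / 2) : ℕ) := by
  set S := {w : FreeGroup (Fin r) | wlen w = n ∧ wlen (w * x) ≤ wlen x}
  rcases S.eq_empty_or_nonempty with hS | ⟨w₀, hw₀⟩
  · simp [hS]
  set s := invRev (x.toWord.take (n - n / 2))
  have hsuffix : ∀ w ∈ S, w.toWord.drop (n / 2) = s := fun w hw =>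
    toWord_drop_half_eq_of_length_toWord_mul_le hw.1 hw.2
  have hs : s ≠ [] ∨ n / 2 = 0 := by
    have := congrArg List.length (hsuffix w₀ hw₀)
    rw [List.length_drop, show w₀.toWord.length = n from hw₀.1] at this
    rw [← List.length_pos_iff]
    omega
  have hinj : S.InjOn (·.toWord.take (n / 2)) := fun w₁ hw₁ w₂ hw₂ h => toWord_injective <| by
    rw [← List.take_append_drop (n / 2) w₁.toWord, ← List.take_append_drop (n / 2) w₂.toWord,
      hsuffix w₁ hw₁, hsuffix w₂ hw₂]
    exact congrArg (· ++ s) h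
  calc S.encard = ((·.toWord.take (n / 2)) '' S).encard := hinj.encard_image.symm
    _ ≤ {l | l.length = n / 2 ∧ IsReduced (l ++ s)}.encard := by
      refine Set.encard_le_encard ?_
      rintro _ ⟨w, hw, rfl⟩
      refine ⟨by simp [show w.toWord.length = n from hw.1, Nat.div_le_self], ?_⟩
      rw [← hsuffix w hw, List.take_append_drop]
      exact isReduced_toWord
    _ ≤ _ := by simpa [hq] using encard_setOf_isReduced_append_le (α := Fin r) (n / 2) hs

/-- For every `x` in the free group and every `n`, the number of `w` with `|w| = n` and
`|w x| ≤ |x|` is at most `q^{⌊n/2⌋}`, where `q = 2r - 1`. -/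
theorem count_length_decreasing_words
    (r : ℕ) (hr : 2 ≤ r) (q : ℕ) (hq : q = 2 * r - 1)
    (x : FreeGroup (Fin r)) (n : ℕ) :
    {w : FreeGroup (Fin r) | wlen w = n ∧ wlen (w * x) ≤ wlen x}.encard
      ≤ (q ^ (n / 2) : ℕ) :=
  count_length_decreasing_words_general r q hq x n
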